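/- In System F, a closed normal λ-term t has type N = ∀X.(X → (X → X) → X) if and only if t is a Church numeral n̲ = λx.λf.(f^n x) for some natural number n. -/

import Mathlib

inductive Lam : Type
  | var : ℕ → Lam
  | app : Lam → Lam → Lam
  | lam : Lam → Lam
deriving DecidableEq

namespace Lam

/-- Lift (shift up by one) all de Bruijn indices ≥ d. -/
def lift (d : ℕ) : Lam → Lam
  | var n => if n < d then var n else var (n + 1)
  | app u v => app (lift d u) (lift d v)
  | lam u => lam (lift (d + 1) u)

/-- Capture-avoiding substitution of s for the de Bruijn index d. -/
def subst (d : ℕ) (s : Lam) : Lam → Lam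
  | var n => if n = d then s else if n < d then var n else var (n - 1)
  | app u v => app (subst d s u) (subst d s v)
  | lam u => lam (subst (d + 1) (lift 0 s) u)

/-- One-step β-reduction. -/
inductive Step : Lam → Lam → Prop
  | beta (u v : Lam) : Step (app (lam u) v) (subst 0 v u)
  | appL {u u' : Lam} (v : Lam) : Step u u' → Step (app u v) (app u' v)
  | appR (u : Lam) {v v' : Lam} : Step v v' → Step (app u v) (app u v')
  | lam {u u' : Lam} : Step u u' → Step (lam u) (lam u')

/-- β-equivalence: the reflexive-symmetric-transitive closure of β-reduction. -/
inductive BetaEq : Lam → Lam → Prop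
  | step {u v} : Step u v → BetaEq u v
  | refl (u) : BetaEq u u
  | symm {u v} : BetaEq u v → BetaEq v u
  | trans {u v w} : BetaEq u v → BetaEq v w → BetaEq u w

/-- One step of head reduction: contract the head redex. -/
inductive HeadStep : Lam → Lam → Prop
  | beta (u v : Lam) : HeadStep (app (lam u) v) (subst 0 v u)
  | appL {u u' : Lam} (v : Lam) : HeadStep u u' → (∀ w, u ≠ lam w) →
      HeadStep (app u v) (app u' v)
  | lam {u u' : Lam} : HeadStep u u' → HeadStep (lam u) (lam u')

/-- `Heads u v`: u head-reduces to v in finitely many steps. -/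
def Heads : Lam → Lam → Prop := Relation.ReflTransGen HeadStep

/-- A term is normal if it contains no β-redex. -/
def Normal (t : Lam) : Prop := ∀ u, ¬ Step t u

/-- All free de Bruijn indices of the term are < d. -/
def ClosedUnder : ℕ → Lam → Prop
  | d, var n => n < d
  | d, app u v => ClosedUnder d u ∧ ClosedUnder d v
  | d, lam u => ClosedUnder (d + 1) u

/-- A term is closed if it has no free variables. -/
def Closed (t : Lam) : Prop := ClosedUnder 0 t

/-- The de Bruijn index i occurs free in the term. -/
def FreeIn : ℕ → Lam → Prop
  | i, var n => n = i
  | i, app u v => FreeIn i u ∨ FreeIn i v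
  | i, lam u => FreeIn (i + 1) u

/-- n-fold application: (f^n x). -/
def iterApp : ℕ → Lam → Lam → Lam
  | 0, _, x => x
  | n + 1, f, x => app f (iterApp n f x)

/-- The n-th Church numeral λx.λf.(f^n x). -/
def church (n : ℕ) : Lam := lam (lam (iterApp n (var 0) (var 1)))

/-- T = λx.λy.x -/
def Ttm : Lam := lam (lam (var 1))

/-- F = λx.λy.y -/
def Ftm : Lam := lam (lam (var 0))

end Lam

/-- Types / formulas of System F, with de Bruijn type variables. -/
inductive Ty : Type
  | var : ℕ → Ty
  | bot : Ty
  | arrow : Ty → Ty → Ty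
  | all : Ty → Ty
deriving DecidableEq

namespace Ty

def lift (d : ℕ) : Ty → Ty
  | var n => if n < d then var n else var (n + 1)
  | bot => bot
  | arrow a b => arrow (lift d a) (lift d b)
  | all a => all (lift (d + 1) a)

/-- Capture-avoiding substitution of the type G for the type variable d: A[G/X]. -/
def subst (d : ℕ) (G : Ty) : Ty → Ty
  | var n => if n = d then G else if n < d then var n else var (n - 1)
  | bot => bot
  | arrow a b => arrow (subst d G a) (subst d G b)
  | all a => all (subst (d + 1) (lift 0 G) a)

/-- The type variable i occurs free in the type. -/
def Free : ℕ → Ty → Prop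
  | i, var n => n = i
  | _, bot => False
  | i, arrow a b => Free i a ∨ Free i b
  | i, all a => Free (i + 1) a

/-- ¬A := A → ⊥ -/
def neg (a : Ty) : Ty := arrow a bot

end Ty

/-- Curry-style System F typing: Γ ⊢_F t : A. -/
inductive Typing : List Ty → Lam → Ty → Prop
  | var {Γ : List Ty} {n : ℕ} {A : Ty} : Γ[n]? = some A → Typing Γ (Lam.var n) A
  | lam {Γ A B t} : Typing (A :: Γ) t B → Typing Γ (Lam.lam t) (Ty.arrow A B)
  | app {Γ A B u v} : Typing Γ u (Ty.arrow A B) → Typing Γ v A →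
      Typing Γ (Lam.app u v) B
  | allI {Γ A t} : Typing (Γ.map (Ty.lift 0)) t A → Typing Γ t (Ty.all A)
  | allE {Γ A t} (G : Ty) : Typing Γ t (Ty.all A) → Typing Γ t (Ty.subst 0 G A)

/-- Minimal second-order propositional logic (the logic of System F). -/
inductive Prov : List Ty → Ty → Prop
  | ax {Γ A} : A ∈ Γ → Prov Γ A
  | arrI {Γ A B} : Prov (A :: Γ) B → Prov Γ (Ty.arrow A B)
  | arrE {Γ A B} : Prov Γ (Ty.arrow A B) → Prov Γ A → Prov Γ B
  | allI {Γ A} : Prov (Γ.map (Ty.lift 0)) A → Prov Γ (Ty.all A)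
  | allE {Γ A} (G : Ty) : Prov Γ (Ty.all A) → Prov Γ (Ty.subst 0 G A)

/-- Classical second-order propositional logic F_C: F plus double-negation elimination. -/
inductive ProvC : List Ty → Ty → Prop
  | ax {Γ A} : A ∈ Γ → ProvC Γ A
  | arrI {Γ A B} : ProvC (A :: Γ) B → ProvC Γ (Ty.arrow A B)
  | arrE {Γ A B} : ProvC Γ (Ty.arrow A B) → ProvC Γ A → ProvC Γ B
  | allI {Γ A} : ProvC (Γ.map (Ty.lift 0)) A → ProvC Γ (Ty.all A)
  | allE {Γ A} (G : Ty) : ProvC Γ (Ty.all A) → ProvC Γ (Ty.subst 0 G A)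
  | dne {Γ A} : ProvC Γ (Ty.neg (Ty.neg A)) → ProvC Γ A

/-- The Gödel translation A ↦ A*. -/
def godel : Ty → Ty
  | Ty.var n => Ty.neg (Ty.var n)
  | Ty.bot => Ty.bot
  | Ty.arrow a b => Ty.arrow (godel a) (godel b)
  | Ty.all a => Ty.all (godel a)

/-- The type of booleans B = ∀X.(X → X → X). -/
def BoolTy : Ty := Ty.all (Ty.arrow (Ty.var 0) (Ty.arrow (Ty.var 0) (Ty.var 0)))

/-- The type of Church integers N = ∀X.(X → ((X → X) → X)). -/
def NatTy : Ty :=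
  Ty.all (Ty.arrow (Ty.var 0) (Ty.arrow (Ty.arrow (Ty.var 0) (Ty.var 0)) (Ty.var 0)))

/-- Peirce's law P = ∀X∀Y.(((X → Y) → X) → X). -/
def PeirceTy : Ty :=
  Ty.all (Ty.all (Ty.arrow (Ty.arrow (Ty.arrow (Ty.var 1) (Ty.var 0)) (Ty.var 1)) (Ty.var 1)))

/-- Q = P → ∀X.X. -/
def QTy : Ty := Ty.arrow PeirceTy (Ty.all (Ty.var 0))

/-!
Church numerals are typed directly. For the converse we use realizability: interpret types as
sets of terms closed under weak-head expansion, so that every term of type `A` lies in the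
interpretation of `A`. Interpreting `X` in `N` by the set of terms reducing to some `f^n x`, where
`x` and `f` are free variables, gives `t x f ↠ f^n x`. A closed normal `t` is an abstraction, and
substituting variables for variables preserves normality, so `t x f` can only reach the normal
term `f^n x` by contracting its two head redexes; this forces `t = λx.λf.(f^n x)`.
-/

infix:50 " ↠β " => Relation.ReflTransGen Lam.Step

section Environments

variable {α : Type*}

def scons (a : α) (σ : ℕ → α) : ℕ → α
  | 0 => a
  | n + 1 => σ n

def insertAt (d : ℕ) (a : α) (σ : ℕ → α) (n : ℕ) : α :=
  if n < d then σ n else if n = d then a else σ (n - 1)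

lemma insertAt_zero (a : α) (σ : ℕ → α) : insertAt 0 a σ = scons a σ := by
  funext n
  cases n <;> simp [insertAt, scons]

lemma insertAt_succ (d : ℕ) (a b : α) (σ : ℕ → α) :
    insertAt (d + 1) a (scons b σ) = scons b (insertAt d a σ) := by
  funext n
  rcases n with _ | _ | n
  · simp [insertAt, scons]
  · cases d <;> simp [insertAt, scons]
  · simp only [insertAt, scons, Nat.add_lt_add_iff_right, Nat.add_right_cancel_iff]
    split_ifs <;> rfl

end Environments

namespace Lam

def up (σ : ℕ → Lam) : ℕ → Lam := scons (var 0) (fun n => lift 0 (σ n))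

def msubst (σ : ℕ → Lam) : Lam → Lam
  | var n => σ n
  | app u v => app (msubst σ u) (msubst σ v)
  | lam u => lam (msubst (up σ) u)

lemma up_var : up var = var := by
  funext n
  cases n <;> simp [up, scons, lift]

lemma msubst_var (u : Lam) : msubst var u = u := by
  induction u with
  | var n => rfl
  | app u v ihu ihv => rw [msubst, ihu, ihv]
  | lam u ih => rw [msubst, up_var, ih]

lemma subst_eq_msubst (u : Lam) : ∀ (d : ℕ) (v : Lam),
    subst d v u = msubst (fun n => subst d v (var n)) u := by
  induction u with
  | var n => intros; rfl
  | app u w ihu ihw => intros; rw [subst, msubst, ihu, ihw]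
  | lam u ih =>
    intro d v
    rw [subst, msubst, ih]
    congr 2
    funext n
    rcases n with _ | m
    · simp [up, scons, subst]
    · simp only [up, scons, subst]
      split_ifs <;> simp only [lift, *] <;> first | rfl | omega | (congr 1; omega)

lemma lift_lift (u : Lam) :
    ∀ {i j : ℕ}, i ≤ j → lift (j + 1) (lift i u) = lift i (lift j u) := by
  induction u with
  | var n =>
    intro i j hij
    simp only [lift]
    split_ifs <;> simp only [lift] <;> split_ifs <;> first | rfl | omega
  | app u v ihu ihv => intro i j hij; rw [lift, lift, ihu hij, ihv hij, lift, lift]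
  | lam u ih => intro i j hij; rw [lift, lift, ih (by omega), lift, lift]

lemma msubst_lift {σ τ : ℕ → Lam} (u : Lam) {d : ℕ}
    (h : ∀ n, msubst σ (lift d (var n)) = lift d (τ n)) :
    msubst σ (lift d u) = lift d (msubst τ u) := by
  induction u generalizing σ τ d with
  | var n => exact h n
  | app u v ihu ihv => rw [lift, msubst, ihu h, ihv h, msubst, lift]
  | lam u ih =>
    rw [lift, msubst, ih, msubst, lift]
    rintro (_ | m)
    · simp [lift, msubst, up, scons]
    · simp only [up, scons]
      rw [lift_lift _ (Nat.zero_le d), ← h m]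
      by_cases hm : m < d <;> simp [lift, msubst, scons, hm]

lemma msubst_up_lift (τ : ℕ → Lam) (u : Lam) :
    msubst (up τ) (lift 0 u) = lift 0 (msubst τ u) :=
  msubst_lift u fun _ => rfl

lemma msubst_msubst (u : Lam) : ∀ σ τ : ℕ → Lam,
    msubst τ (msubst σ u) = msubst (fun n => msubst τ (σ n)) u := by
  induction u with
  | var n => intros; rfl
  | app u v ihu ihv => intros; rw [msubst, msubst, ihu, ihv, msubst]
  | lam u ih =>
    intro σ τ
    rw [msubst, msubst, ih, msubst]
    congr 2
    funext n
    cases n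
    · rfl
    · exact msubst_up_lift τ _

lemma subst_lift (u : Lam) : ∀ (d : ℕ) (v : Lam), subst d v (lift d u) = u := by
  induction u with
  | var n =>
    intro d v
    simp only [lift]
    split_ifs <;> simp only [subst] <;> split_ifs <;> first | rfl | omega
  | app u w ihu ihw => intros; rw [lift, subst, ihu, ihw]
  | lam u ih => intros; rw [lift, subst, ih]

lemma subst_msubst_up (u v : Lam) (σ : ℕ → Lam) :
    subst 0 v (msubst (up σ) u) = msubst (scons v σ) u := by
  rw [subst_eq_msubst, msubst_msubst]
  congr 1
  funext n
  rw [← subst_eq_msubst]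
  cases n
  · simp [up, scons, subst]
  · exact subst_lift _ 0 v

lemma ClosedUnder.msubst_eq {σ : ℕ → Lam} {t : Lam} {d : ℕ} (hc : ClosedUnder d t)
    (hσ : ∀ n < d, σ n = var n) : msubst σ t = t := by
  induction t generalizing σ d with
  | var n => exact hσ n hc
  | app u v ihu ihv => rw [msubst, ihu hc.1 hσ, ihv hc.2 hσ]
  | lam u ih =>
    rw [msubst, ih hc]
    rintro (_ | m) hm
    · rfl
    · simp [up, scons, hσ m (by omega), lift]

lemma subst_subst_var_eq_self {w : Lam} (hc : ClosedUnder 2 w) :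
    subst 0 (var 0) (subst 1 (var 2) w) = w := by
  rw [subst_eq_msubst, subst_eq_msubst (d := 1), msubst_msubst]
  refine hc.msubst_eq fun n hn => ?_
  interval_cases n <;> simp [subst, msubst]

lemma normal_var (n : ℕ) : Normal (var n) := fun _ h => nomatch h

lemma normal_lam_iff {u : Lam} : Normal (lam u) ↔ Normal u :=
  ⟨fun h s hs => h _ (.lam hs), fun h s hs => by cases hs with | lam hs => exact h _ hs⟩

lemma normal_app_iff {a b : Lam} :
    Normal (app a b) ↔ Normal a ∧ Normal b ∧ ∀ w, a ≠ lam w := by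
  refine ⟨fun h => ⟨fun s hs => h _ (.appL b hs), fun s hs => h _ (.appR a hs), ?_⟩, ?_⟩
  · rintro w rfl
    exact h _ (.beta w b)
  · rintro ⟨ha, hb, hne⟩ s hs
    cases hs with
    | beta w => exact hne w rfl
    | appL _ hs => exact ha _ hs
    | appR _ hs => exact hb _ hs

lemma Normal.reds_eq {z y : Lam} (hz : Normal z) (h : z ↠β y) : z = y := by
  rcases h.cases_head with h | ⟨c, hc, -⟩
  · exact h
  · exact absurd hc (hz c)

lemma Normal.exists_eq_lam {t : Lam} (hn : Normal t) (hc : Closed t) : ∃ u, t = lam u := by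
  induction t with
  | var n => exact absurd hc (Nat.not_lt_zero n)
  | app a b iha =>
    obtain ⟨ha, -, hne⟩ := normal_app_iff.mp hn
    obtain ⟨w, rfl⟩ := iha ha hc.1
    exact absurd rfl (hne w)
  | lam u => exact ⟨u, rfl⟩

lemma Normal.subst_var {u : Lam} (hu : Normal u) {d j : ℕ} : Normal (subst d (var j) u) := by
  induction u generalizing d j with
  | var n =>
    simp only [subst]
    split_ifs <;> exact normal_var _
  | app a b iha ihb =>
    obtain ⟨ha, hb, hne⟩ := normal_app_iff.mp hu
    refine normal_app_iff.mpr ⟨iha ha, ihb hb, fun w hw => ?_⟩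
    cases a with
    | var n =>
      simp only [subst] at hw
      split_ifs at hw
    | app => cases hw
    | lam a => exact hne a rfl
  | lam u ih =>
    simpa [subst, lift, normal_lam_iff] using ih (normal_lam_iff.mp hu)

lemma Step.foldl_app {a b : Lam} (h : Step a b) (π : List Lam) :
    Step (π.foldl app a) (π.foldl app b) := by
  induction π generalizing a b with
  | nil => exact h
  | cons w π ih => exact ih (.appL w h)

lemma reds_app_cases {a v y : Lam} (hv : Normal v) (h : app a v ↠β y) :
    (∃ a', a ↠β a' ∧ y = app a' v) ∨
      ∃ w, a ↠β lam w ∧ subst 0 v w ↠β y := by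
  induction h with
  | refl => exact .inl ⟨a, .refl, rfl⟩
  | tail _ hbc ih =>
    rcases ih with ⟨a', ha', rfl⟩ | ⟨w, hw, hwy⟩
    · cases hbc with
      | beta w => exact .inr ⟨w, ha', .refl⟩
      | appL _ hs => exact .inl ⟨_, ha'.tail hs, rfl⟩
      | appR _ hs => exact absurd hs (hv _)
    · exact .inr ⟨w, hw, hwy.tail hbc⟩

lemma reds_app_lam_var {u y : Lam} {j : ℕ} (hu : Normal (lam u))
    (h : app (lam u) (var j) ↠β y) :
    y = app (lam u) (var j) ∨ y = subst 0 (var j) u := by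
  rcases reds_app_cases (normal_var j) h with ⟨a', ha', rfl⟩ | ⟨w, hw, hwy⟩
  · exact .inl (by rw [hu.reds_eq ha'])
  · obtain rfl := lam.inj (hu.reds_eq hw)
    exact .inr ((normal_lam_iff.mp hu).subst_var.reds_eq hwy).symm

lemma eq_church_of_reds {u : Lam} {n : ℕ} (hu : Normal (lam u)) (hc : ClosedUnder 1 u)
    (h : app (app (lam u) (var 1)) (var 0) ↠β iterApp n (var 0) (var 1)) :
    lam u = church n := by
  rcases reds_app_cases (normal_var 0) h with ⟨a', ha', heq⟩ | ⟨w, hw, hwn⟩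
  · exfalso
    obtain _ | m := n
    · cases heq
    obtain ⟨rfl, -⟩ := app.inj heq
    rcases reds_app_lam_var hu ha' with h' | h'
    · cases h'
    · cases u with
      | var m =>
        obtain rfl : m = 0 := Nat.lt_one_iff.mp hc
        simp [subst] at h'
      | app | lam => cases h'
  · rcases reds_app_lam_var hu hw with h' | h'
    · cases h'
    obtain _ | _ | w₀ := u
    · simp only [subst] at h'
      split_ifs at h'
    · cases h'
    obtain rfl : w = subst 1 (var 2) w₀ := by simpa [subst, lift] using h'
    rw [subst_subst_var_eq_self hc] at hwn
    rw [church, (normal_lam_iff.mp (normal_lam_iff.mp hu)).reds_eq hwn]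

end Lam

/-- Krivine's saturated sets: closed under weak-head expansion. -/
def Lam.Saturated (S : Set Lam) : Prop :=
  ∀ u v (π : List Lam),
    π.foldl .app (Lam.subst 0 v u) ∈ S → π.foldl .app (.app (.lam u) v) ∈ S

namespace Ty

def interp (ρ : ℕ → Set Lam) : Ty → Set Lam
  | var n => ρ n
  | bot => ∅
  | arrow A B => {t | ∀ v ∈ interp ρ A, Lam.app t v ∈ interp ρ B}
  | all A => {t | ∀ S, Lam.Saturated S → t ∈ interp (scons S ρ) A}

lemma interp_lift (A : Ty) : ∀ (d : ℕ) (S : Set Lam) (ρ : ℕ → Set Lam),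
    interp (insertAt d S ρ) (lift d A) = interp ρ A := by
  induction A with
  | var n =>
    intro d S ρ
    by_cases h : n < d
    · simp [lift, h, interp, insertAt]
    · simp [lift, h, interp, insertAt, show ¬ n + 1 < d by omega, show n + 1 ≠ d by omega]
  | bot => intros; rfl
  | arrow A B ihA ihB => intros; simp only [lift, interp, ihA, ihB]
  | all A ih => intros; simp only [lift, interp, ← insertAt_succ, ih]

lemma interp_subst (A : Ty) : ∀ (G : Ty) (d : ℕ) (ρ : ℕ → Set Lam),
    interp ρ (subst d G A) = interp (insertAt d (interp ρ G) ρ) A := by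
  induction A with
  | var n =>
    intro G d ρ
    rcases lt_trichotomy n d with h | rfl | h
    · simp [subst, insertAt, interp, h, h.ne]
    · simp [subst, insertAt, interp]
    · simp [subst, insertAt, interp, h.ne', h.not_gt]
  | bot => intros; rfl
  | arrow A B ihA ihB => intros; simp only [subst, interp, ihA, ihB]
  | all A ih =>
    intro G d ρ
    have hG : ∀ T, interp (scons T ρ) (lift 0 G) = interp ρ G := fun T => by
      rw [← insertAt_zero, interp_lift]
    simp only [subst, interp, ih, hG, insertAt_succ]

lemma saturated_interp (A : Ty) :
    ∀ {ρ : ℕ → Set Lam}, (∀ n, Lam.Saturated (ρ n)) → Lam.Saturated (interp ρ A) := by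
  induction A with
  | var n => exact fun hρ => hρ n
  | bot => exact fun _ _ _ _ hm => hm
  | arrow A B _ ihB =>
    intro ρ hρ u v π hm w hw
    simpa using ihB hρ u v (π ++ [w]) (by simpa using hm w hw)
  | all A ih =>
    intro ρ hρ u v π hm S hS
    refine ih (fun n => ?_) u v π (hm S hS)
    cases n
    exacts [hS, hρ _]

end Ty

theorem Typing.msubst_mem_interp {Γ : List Ty} {t : Lam} {A : Ty} (h : Typing Γ t A) :
    ∀ {ρ : ℕ → Set Lam} {σ : ℕ → Lam}, (∀ n, Lam.Saturated (ρ n)) →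
      (∀ n B, Γ[n]? = some B → σ n ∈ Ty.interp ρ B) →
      Lam.msubst σ t ∈ Ty.interp ρ A := by
  induction h with
  | var hn => exact fun _ hσ => hσ _ _ hn
  | @lam Γ A B t _ ih =>
    intro ρ σ hρ hσ v hv
    refine Ty.saturated_interp B hρ _ v [] ?_
    rw [List.foldl_nil, Lam.subst_msubst_up]
    refine ih hρ fun n B' hn => ?_
    cases n with
    | zero => cases hn; exact hv
    | succ n => exact hσ n B' hn
  | app _ _ ih₁ ih₂ => exact fun hρ hσ => ih₁ hρ hσ _ (ih₂ hρ hσ)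
  | @allI Γ A t _ ih =>
    intro ρ σ hρ hσ S hS
    refine ih (fun n => ?_) fun n B hn => ?_
    · cases n
      exacts [hS, hρ _]
    · obtain ⟨B₀, hB₀, rfl⟩ := Option.map_eq_some_iff.mp (List.getElem?_map ▸ hn)
      rw [← insertAt_zero, Ty.interp_lift]
      exact hσ n B₀ hB₀
  | allE G _ ih =>
    intro ρ σ hρ hσ
    rw [Ty.interp_subst, insertAt_zero]
    exact ih hρ hσ _ (Ty.saturated_interp G hρ)

namespace Lam

lemma typing_iterApp {Γ : List Ty} {f x : Lam} {A : Ty} (hf : Typing Γ f (.arrow A A))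
    (hx : Typing Γ x A) (n : ℕ) : Typing Γ (iterApp n f x) A := by
  induction n with
  | zero => exact hx
  | succ n ih => exact .app hf ih

lemma typing_church (n : ℕ) : Typing [] (church n) NatTy :=
  .allI (.lam (.lam (typing_iterApp (.var rfl) (.var rfl) n)))

lemma exists_reds_iterApp_of_typing {t : Lam} (h : Typing [] t NatTy) :
    ∃ n, app (app t (var 1)) (var 0) ↠β iterApp n (var 0) (var 1) := by
  let S : Set Lam := {w | ∃ n, w ↠β iterApp n (var 0) (var 1)}
  have hS : Saturated S := fun u v π ⟨n, hn⟩ =>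
    ⟨n, .head ((Step.beta u v).foldl_app π) hn⟩
  have ht := h.msubst_mem_interp (ρ := fun _ => S) (σ := var) (fun _ => hS) (by simp)
  rw [msubst_var] at ht
  refine ht S hS (var 1) ⟨0, .refl⟩ (var 0) fun w ⟨n, hn⟩ => ⟨n + 1, ?_⟩
  exact hn.lift (app (var 0)) fun _ _ => Step.appR _

end Lam

/-- A closed normal term has type N = ∀X.(X → (X → X) → X) iff it is a
Church numeral. -/
theorem systemF_nat_characterization {t : Lam}
    (hnorm : Lam.Normal t) (hcl : Lam.Closed t) :
    Typing [] t NatTy ↔ ∃ n : ℕ, t = Lam.church n := by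
  refine ⟨fun h => ?_, fun ⟨n, hn⟩ => hn ▸ Lam.typing_church n⟩
  obtain ⟨u, rfl⟩ := hnorm.exists_eq_lam hcl
  obtain ⟨n, hn⟩ := Lam.exists_reds_iterApp_of_typing h
  exact ⟨n, Lam.eq_church_of_reds hnorm hcl hn⟩
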